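/- In L = ℚ(√2, √3) over K = ℚ(√3), radial decomposition is not unique: the element δ = (21 + 9√3) + (30 + 16√3)(2 + √2) of 𝒪_L⁺ satisfies δ = α₁γ₁ = α₂γ₂ where α₁ = 3 + √3, α₂ = 6 + √3 ∈ 𝒪_K⁺, γ₁ = (6 + √3) + (7 + 3√3)(2 + √2), γ₂ = (3 + √3) + (4 + 2√3)(2 + √2) are both L/K-primitive, and (α₁, γ₁) ≠ (α₂, γ₂) even up to multiplication by totally positive units of 𝒪_K. -/

import Mathlib

open NumberField
open scoped Classical

/-- `L` is totally real: every complex embedding has real image. -/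
def TotallyReal (L : Type) [Field L] [NumberField L] : Prop :=
  ∀ φ : L →+* ℂ, ∀ x : L, (φ x).im = 0

/-- An algebraic integer is totally positive if every real embedding sends it to a
positive real number. -/
def TPos (L : Type) [Field L] [NumberField L] (x : 𝓞 L) : Prop :=
  ∀ φ : L →+* ℝ, 0 < φ (x : L)

/-- With `𝒪_K = ℤ[√3]` realized as the subring of `𝓞 L` generated by `s3 = √3`,
`δ ∈ 𝒪_L⁺` is `L/K`-primitive if `δ ∉ α·𝒪_L⁺` for every non-unit totally positive
`α` in that subring. -/
def LKPrim (L : Type) [Field L] [NumberField L] (s3 δ : 𝓞 L) : Prop :=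
  TPos L δ ∧ ∀ α ∈ Subring.closure ({s3} : Set (𝓞 L)), TPos L α → ¬ IsUnit α →
    ∀ β : 𝓞 L, TPos L β → δ ≠ α * β

private lemma int_sq_ne {n : ℤ} (hn : n = 2 ∨ n = 3 ∨ n = 6) : ¬ IsSquare n := by
  rintro ⟨m, hm⟩
  rcases hn with rfl | rfl | rfl <;>
  · have h1 : m ≤ 3 := by nlinarith [sq_nonneg (m - 3), sq_nonneg (m + 3)]
    have h2 : -3 ≤ m := by nlinarith [sq_nonneg (m - 3), sq_nonneg (m + 3)]
    interval_cases m <;> omega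

private lemma rat_sq_ne {n : ℤ} (hn : n = 2 ∨ n = 3 ∨ n = 6) (c : ℚ) : c ^ 2 ≠ (n : ℚ) := by
  intro h
  apply int_sq_ne hn
  rw [← Rat.isSquare_intCast_iff]
  exact ⟨c, by rw [← h]; ring⟩

private lemma rat_coeff {y : ℝ} (hy : y ^ 2 = 3) {a b : ℚ} (h : (a : ℝ) + (b : ℝ) * y = 0) :
    a = 0 ∧ b = 0 := by
  by_cases hb : b = 0
  · refine ⟨?_, hb⟩
    rw [hb] at h
    have : (a : ℝ) = 0 := by push_cast at h; linarith
    exact_mod_cast this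
  · exfalso
    have hbR : (b : ℝ) ≠ 0 := by exact_mod_cast hb
    have hyv : y = ((-a / b : ℚ) : ℝ) := by push_cast; field_simp; linarith
    apply rat_sq_ne (n := 3) (by norm_num) (-a / b)
    have : (((-a / b : ℚ) : ℝ)) ^ 2 = 3 := by rw [← hyv]; exact hy
    exact_mod_cast this

private lemma sq_emod_three (a : ℤ) : a ^ 2 % 3 = 0 ∨ a ^ 2 % 3 = 1 := by
  have ha : a % 3 = 0 ∨ a % 3 = 1 ∨ a % 3 = 2 := by omega
  obtain ⟨k, hk⟩ : ∃ k, a = 3 * k + a % 3 := ⟨a / 3, by omega⟩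
  rcases ha with h | h | h <;> rw [h] at hk <;> subst hk
  · left
    have : (3 * k + 0) ^ 2 = 3 * (3 * k ^ 2) := by ring
    rw [this]; exact Int.mul_emod_right 3 _
  · right
    have : (3 * k + 1) ^ 2 = 1 + 3 * (3 * k ^ 2 + 2 * k) := by ring
    rw [this, Int.add_mul_emod_self_left]; norm_num
  · right
    have : (3 * k + 2) ^ 2 = 1 + 3 * (3 * k ^ 2 + 4 * k + 1) := by ring
    rw [this, Int.add_mul_emod_self_left]; norm_num

private lemma no_sq_two_mod_three {a b c : ℤ} (hc : c = 11 ∨ c = 2) (h : a ^ 2 - 3 * b ^ 2 = c) :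
    False := by
  have h2 : a ^ 2 = 2 + 3 * (b ^ 2 + (c - 2) / 3) := by rcases hc with rfl | rfl <;> omega
  have h3 : a ^ 2 % 3 = 2 := by rw [h2, Int.add_mul_emod_self_left]; norm_num
  rcases sq_emod_three a with h' | h' <;> omega

private lemma divisor_cases {d : ℤ} (hd : 0 < d) (hdvd : d ^ 2 ∣ 40777) : d = 1 ∨ d = 11 := by
  have hle : d ^ 2 ≤ 40777 := Int.le_of_dvd (by norm_num) hdvd
  have h201 : d ≤ 201 := by nlinarith
  have hdvd' : d * d ∣ 40777 := by rwa [pow_two] at hdvd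
  interval_cases d <;> omega

private lemma divisor_cases' {d : ℤ} (hd : 0 < d) (hdvd : d ^ 2 ∣ 1348) : d = 1 ∨ d = 2 := by
  have hle : d ^ 2 ≤ 1348 := Int.le_of_dvd (by norm_num) hdvd
  have h37 : d ≤ 37 := by nlinarith
  have hdvd' : d * d ∣ 1348 := by rwa [pow_two] at hdvd
  interval_cases d <;> omega

private lemma indep_real {x y : ℝ} (hx : x ^ 2 = 2) (hy : y ^ 2 = 3) :
    LinearIndependent ℚ ![(1 : ℝ), x, y, x * y] := by
  rw [Fintype.linearIndependent_iff]
  intro g hg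
  have hg' : (g 0 : ℝ) + (g 1 : ℝ) * x + (g 2 : ℝ) * y + (g 3 : ℝ) * (x * y) = 0 := by
    have := hg
    simp [Fin.sum_univ_four, Rat.smul_def] at this
    linarith [this]
  set p := g 0 with hp0
  set q := g 1 with hq0
  set r := g 2 with hr0
  set t := g 3 with ht0
  have hsq : ((p : ℝ) + (r : ℝ) * y) ^ 2 = 2 * ((q : ℝ) + (t : ℝ) * y) ^ 2 := by
    have h1 : ((p : ℝ) + (r : ℝ) * y) = -(((q : ℝ) + (t : ℝ) * y)) * x := by
      linear_combination hg'
    rw [h1]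
    linear_combination (((q : ℝ) + (t : ℝ) * y) ^ 2) * hx
  by_cases hB : ((q : ℝ) + (t : ℝ) * y) = 0
  · obtain ⟨hq, ht⟩ := rat_coeff hy hB
    have hA : ((p : ℝ) + (r : ℝ) * y) = 0 := by
      have h0 : ((p : ℝ) + (r : ℝ) * y) ^ 2 = 0 := by rw [hsq, hB]; ring
      exact pow_eq_zero_iff (by norm_num) |>.mp h0
    obtain ⟨hp, hr⟩ := rat_coeff hy hA
    intro i; fin_cases i <;> assumption
  · exfalso
    have hD : (q ^ 2 - 3 * t ^ 2 : ℚ) ≠ 0 := by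
      intro hD0
      by_cases ht : t = 0
      · have hq : q = 0 := by
          rw [ht] at hD0; simpa [pow_eq_zero_iff] using hD0
        exact hB (by rw [hq, ht]; push_cast; ring)
      · exact rat_sq_ne (n := 3) (by norm_num) (q / t) (by field_simp; push_cast; linarith [hD0])
    set U : ℚ := p * q - 3 * r * t with hU
    set V : ℚ := r * q - p * t with hV
    set D : ℚ := q ^ 2 - 3 * t ^ 2 with hDdef
    have hfac : ((U : ℝ) + (V : ℝ) * y) * ((q : ℝ) + (t : ℝ) * y)
        = (D : ℝ) * ((p : ℝ) + (r : ℝ) * y) := by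
      rw [hU, hV, hDdef]; push_cast
      linear_combination ((r : ℝ) * q - p * t) * (t : ℝ) * hy
    have hsq2 : ((U : ℝ) + (V : ℝ) * y) ^ 2 = 2 * (D : ℝ) ^ 2 := by
      have hc : ((U : ℝ) + (V : ℝ) * y) ^ 2 * ((q : ℝ) + (t : ℝ) * y) ^ 2
          = (2 * (D : ℝ) ^ 2) * ((q : ℝ) + (t : ℝ) * y) ^ 2 := by
        linear_combination (((U : ℝ) + V * y) * ((q : ℝ) + t * y) + D * ((p : ℝ) + r * y)) * hfac
          + (D : ℝ) ^ 2 * hsq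
      exact mul_right_cancel₀ (pow_ne_zero 2 hB) hc
    have hlin : ((U ^ 2 + 3 * V ^ 2 - 2 * D ^ 2 : ℚ) : ℝ) + ((2 * U * V : ℚ) : ℝ) * y = 0 := by
      push_cast
      linear_combination hsq2 - (V : ℝ) ^ 2 * hy
    obtain ⟨e1, e2⟩ := rat_coeff hy hlin
    have e2' : U = 0 ∨ V = 0 := by
      rcases mul_eq_zero.mp (show (2 * U) * V = 0 by linarith) with h | h
      · left; linarith
      · right; exact h
    rcases e2' with hU0 | hV0
    · apply rat_sq_ne (n := 6) (by norm_num) (3 * V / D)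
      field_simp
      push_cast
      nlinarith [e1, hU0]
    · apply rat_sq_ne (n := 2) (by norm_num) (U / D)
      field_simp
      push_cast
      nlinarith [e1, hV0]

private def realify {L : Type} [Field L] [NumberField L] (φ : L →+* ℂ)
    (h : ∀ x : L, (φ x).im = 0) : L →+* ℝ where
  toFun x := (φ x).re
  map_one' := by simp
  map_mul' x y := by
    show (φ (x * y)).re = (φ x).re * (φ y).re
    rw [map_mul]; simp [Complex.mul_re, h x, h y]
  map_zero' := by simp
  map_add' x y := by
    show (φ (x + y)).re = (φ x).re + (φ y).re
    rw [map_add]; simp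

private lemma RDNU_norm_prod {L : Type} [Field L] [NumberField L] (x : 𝓞 L) :
    ((Algebra.norm ℤ x : ℤ) : ℂ) = ∏ φ : L →+* ℂ, φ (x : L) := by
  have h1 : (Algebra.norm ℤ x : ℚ) = Algebra.norm ℚ (x : L) := Algebra.coe_norm_int x
  have h2 : algebraMap ℚ ℂ (Algebra.norm ℚ (x : L)) = ∏ σ : L →ₐ[ℚ] ℂ, σ (x : L) :=
    Algebra.norm_eq_prod_embeddings ℚ ℂ _
  have h3 : ∏ φ : L →+* ℂ, φ (x : L) = ∏ σ : L →ₐ[ℚ] ℂ, σ (x : L) :=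
    Fintype.prod_equiv (RingHom.equivRatAlgHom L ℂ) _ _ (fun φ => rfl)
  rw [h3, ← h2, ← h1]
  norm_cast

private lemma closure_repr {L : Type} [Field L] [NumberField L] (s3 : 𝓞 L) (h3 : s3 ^ 2 = 3)
    {x : 𝓞 L} (hx : x ∈ Subring.closure ({s3} : Set (𝓞 L))) :
    ∃ a b : ℤ, x = (a : 𝓞 L) + (b : 𝓞 L) * s3 := by
  induction hx using Subring.closure_induction with
  | mem y hy => exact ⟨0, 1, by simp [Set.mem_singleton_iff.mp hy]⟩
  | zero => exact ⟨0, 0, by simp⟩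
  | one => exact ⟨1, 0, by simp⟩
  | add y z _ _ hy hz =>
    obtain ⟨a, b, rfl⟩ := hy; obtain ⟨c, d, rfl⟩ := hz
    exact ⟨a + c, b + d, by push_cast; ring⟩
  | neg y _ hy =>
    obtain ⟨a, b, rfl⟩ := hy
    exact ⟨-a, -b, by push_cast; ring⟩
  | mul y z _ _ hy hz =>
    obtain ⟨a, b, rfl⟩ := hy; obtain ⟨c, d, rfl⟩ := hz
    refine ⟨a * c + 3 * b * d, a * d + b * c, ?_⟩
    push_cast
    linear_combination ((b : 𝓞 L) * (d : 𝓞 L)) * h3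

set_option maxHeartbeats 2000000 in
/-- In `L = ℚ(√2, √3)` over `K = ℚ(√3)`, radial decomposition is not unique. -/
theorem radial_decomposition_not_unique
    (L : Type) [Field L] [NumberField L] (hL : TotallyReal L)
    (hdeg : Module.finrank ℚ L = 4)
    (s2 s3 : 𝓞 L) (h2 : s2 ^ 2 = 2) (h3 : s3 ^ 2 = 3) :
    let δ : 𝓞 L := (21 + 9 * s3) + (30 + 16 * s3) * (2 + s2)
    let α₁ : 𝓞 L := 3 + s3
    let α₂ : 𝓞 L := 6 + s3
    let γ₁ : 𝓞 L := (6 + s3) + (7 + 3 * s3) * (2 + s2)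
    let γ₂ : 𝓞 L := (3 + s3) + (4 + 2 * s3) * (2 + s2)
    TPos L δ ∧
      α₁ ∈ Subring.closure ({s3} : Set (𝓞 L)) ∧ TPos L α₁ ∧ ¬ IsUnit α₁ ∧
      α₂ ∈ Subring.closure ({s3} : Set (𝓞 L)) ∧ TPos L α₂ ∧ ¬ IsUnit α₂ ∧
      LKPrim L s3 γ₁ ∧ LKPrim L s3 γ₂ ∧
      δ = α₁ * γ₁ ∧ δ = α₂ * γ₂ ∧
      ∀ u ∈ Subring.closure ({s3} : Set (𝓞 L)), IsUnit u → TPos L u → γ₂ ≠ u * γ₁ := by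
  intro δ α₁ α₂ γ₁ γ₂
  -- squares in `L`
  have h2L : ((s2 : L)) ^ 2 = 2 := by
    have := congrArg (algebraMap (𝓞 L) L) h2
    simpa [map_pow, map_ofNat] using this
  have h3L : ((s3 : L)) ^ 2 = 3 := by
    have := congrArg (algebraMap (𝓞 L) L) h3
    simpa [map_pow, map_ofNat] using this
  -- squares under any real embedding
  have hRsq : ∀ ψ : L →+* ℝ, (ψ (s2 : L)) ^ 2 = 2 ∧ (ψ (s3 : L)) ^ 2 = 3 := by
    intro ψ
    constructor
    · have := congrArg ψ h2L; simpa [map_pow, map_ofNat] using this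
    · have := congrArg ψ h3L; simpa [map_pow, map_ofNat] using this
  have hbnd : ∀ ψ : L →+* ℝ,
      (-1.5 < ψ (s2 : L) ∧ ψ (s2 : L) < 1.5) ∧ (-1.8 < ψ (s3 : L) ∧ ψ (s3 : L) < 1.8) := by
    intro ψ
    obtain ⟨ha, hb⟩ := hRsq ψ
    refine ⟨⟨?_, ?_⟩, ?_, ?_⟩ <;> nlinarith [ha, hb]
  -- total positivity of the five elements
  have hTδ : TPos L δ := by
    intro ψ
    obtain ⟨⟨hx1, hx2⟩, ⟨hy1, hy2⟩⟩ := hbnd ψ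
    have hv : ψ (δ : L) = (21 + 9 * ψ (s3 : L)) + (30 + 16 * ψ (s3 : L)) * (2 + ψ (s2 : L)) := by
      show ψ ((((21 + 9 * s3) + (30 + 16 * s3) * (2 + s2) : 𝓞 L)) : L) = _
      simp only [RingOfIntegers.coe_eq_algebraMap, map_add, map_mul, map_ofNat]
    rw [hv]
    have c1 : (0:ℝ) < 30 + 16 * ψ (s3 : L) := by linarith
    have c2 : (0:ℝ) < 2 + ψ (s2 : L) := by linarith
    nlinarith [mul_pos c1 c2]
  have hTα₁ : TPos L α₁ := by
    intro ψ
    obtain ⟨⟨hx1, hx2⟩, ⟨hy1, hy2⟩⟩ := hbnd ψ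
    have hv : ψ (α₁ : L) = 3 + ψ (s3 : L) := by
      show ψ (((3 + s3 : 𝓞 L)) : L) = _
      simp only [RingOfIntegers.coe_eq_algebraMap, map_add, map_ofNat]
    rw [hv]; linarith
  have hTα₂ : TPos L α₂ := by
    intro ψ
    obtain ⟨⟨hx1, hx2⟩, ⟨hy1, hy2⟩⟩ := hbnd ψ
    have hv : ψ (α₂ : L) = 6 + ψ (s3 : L) := by
      show ψ (((6 + s3 : 𝓞 L)) : L) = _
      simp only [RingOfIntegers.coe_eq_algebraMap, map_add, map_ofNat]
    rw [hv]; linarith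
  have hTγ₁ : TPos L γ₁ := by
    intro ψ
    obtain ⟨⟨hx1, hx2⟩, ⟨hy1, hy2⟩⟩ := hbnd ψ
    have hv : ψ (γ₁ : L) = (6 + ψ (s3 : L)) + (7 + 3 * ψ (s3 : L)) * (2 + ψ (s2 : L)) := by
      show ψ ((((6 + s3) + (7 + 3 * s3) * (2 + s2) : 𝓞 L)) : L) = _
      simp only [RingOfIntegers.coe_eq_algebraMap, map_add, map_mul, map_ofNat]
    rw [hv]
    have c1 : (0:ℝ) < 7 + 3 * ψ (s3 : L) := by linarith
    have c2 : (0:ℝ) < 2 + ψ (s2 : L) := by linarith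
    nlinarith [mul_pos c1 c2]
  have hTγ₂ : TPos L γ₂ := by
    intro ψ
    obtain ⟨⟨hx1, hx2⟩, ⟨hy1, hy2⟩⟩ := hbnd ψ
    have hv : ψ (γ₂ : L) = (3 + ψ (s3 : L)) + (4 + 2 * ψ (s3 : L)) * (2 + ψ (s2 : L)) := by
      show ψ ((((3 + s3) + (4 + 2 * s3) * (2 + s2) : 𝓞 L)) : L) = _
      simp only [RingOfIntegers.coe_eq_algebraMap, map_add, map_mul, map_ofNat]
    rw [hv]
    have c1 : (0:ℝ) < 4 + 2 * ψ (s3 : L) := by linarith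
    have c2 : (0:ℝ) < 2 + ψ (s2 : L) := by linarith
    nlinarith [mul_pos c1 c2]
  -- complex embeddings
  have hcard : Fintype.card (L →+* ℂ) = 4 := by
    rw [NumberField.Embeddings.card L ℂ, hdeg]
  have hne : Nonempty (L →+* ℂ) := by
    rw [← Fintype.card_pos_iff, hcard]; norm_num
  obtain ⟨φ₀⟩ := hne
  set c2 : ℂ := φ₀ (s2 : L) with hc2def
  set c3 : ℂ := φ₀ (s3 : L) with hc3def
  have hc2 : c2 ^ 2 = 2 := by
    rw [hc2def, ← map_pow, h2L]; exact map_ofNat φ₀ 2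
  have hc3 : c3 ^ 2 = 3 := by
    rw [hc3def, ← map_pow, h3L]; exact map_ofNat φ₀ 3
  have hc2ne : c2 ≠ -c2 := by
    intro h
    have h0 : c2 = 0 := by linear_combination (1/2 : ℂ) * h
    rw [h0] at hc2; norm_num at hc2
  have hc3ne : c3 ≠ -c3 := by
    intro h
    have h0 : c3 = 0 := by linear_combination (1/2 : ℂ) * h
    rw [h0] at hc3; norm_num at hc3
  -- linear independence and spanning
  have him0 : ∀ x : L, (φ₀ x).im = 0 := hL φ₀
  set ψ₀ : L →+* ℝ := realify φ₀ him0 with hψ₀def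
  have hindep : LinearIndependent ℚ ![(1 : L), (s2 : L), (s3 : L), (s2 : L) * (s3 : L)] := by
    apply LinearIndependent.of_comp (ψ₀.toRatAlgHom.toLinearMap)
    have heq : (ψ₀.toRatAlgHom.toLinearMap ∘ ![(1 : L), (s2 : L), (s3 : L), (s2 : L) * (s3 : L)])
        = ![(1 : ℝ), ψ₀ (s2 : L), ψ₀ (s3 : L), ψ₀ (s2 : L) * ψ₀ (s3 : L)] := by
      funext i
      fin_cases i
      · exact map_one ψ₀
      · rfl
      · rfl
      · exact map_mul ψ₀ _ _
    rw [heq]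
    exact indep_real (hRsq ψ₀).1 (hRsq ψ₀).2
  have hspan : Submodule.span ℚ
      (Set.range ![(1 : L), (s2 : L), (s3 : L), (s2 : L) * (s3 : L)]) = ⊤ :=
    hindep.span_eq_top_of_card_eq_finrank (by rw [Fintype.card_fin, hdeg])
  have hext : ∀ φ ψ : L →+* ℂ, φ (s2 : L) = ψ (s2 : L) → φ (s3 : L) = ψ (s3 : L) → φ = ψ := by
    intro φ ψ hs2 hs3
    have hlm : φ.toRatAlgHom.toLinearMap = ψ.toRatAlgHom.toLinearMap := by
      apply LinearMap.ext_on_range hspan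
      intro i
      fin_cases i
      · show φ (1 : L) = ψ (1 : L)
        rw [map_one, map_one]
      · exact hs2
      · exact hs3
      · show φ ((s2 : L) * (s3 : L)) = ψ ((s2 : L) * (s3 : L))
        rw [map_mul, map_mul, hs2, hs3]
    ext x
    exact congrArg (fun f => f x) (congrArg DFunLike.coe hlm)
  -- the four embeddings realize the four sign pairs
  set S : Finset (ℂ × ℂ) := {(c2, c3), (c2, -c3), (-c2, c3), (-c2, -c3)} with hSdef
  have hScard : S.card = 4 := by
    rw [hSdef]
    rw [Finset.card_insert_of_notMem (by simp [Prod.ext_iff, hc2ne, hc3ne]),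
      Finset.card_insert_of_notMem (by simp [Prod.ext_iff, hc2ne, hc3ne]),
      Finset.card_insert_of_notMem (by simp [Prod.ext_iff, hc2ne, hc3ne]),
      Finset.card_singleton]
  set e : (L →+* ℂ) → ℂ × ℂ := fun φ => (φ (s2 : L), φ (s3 : L)) with hedef
  have hsqchoice : ∀ (w z : ℂ), w ^ 2 = z ^ 2 → w = z ∨ w = -z := by
    intro w z h
    rcases mul_eq_zero.mp (show (w - z) * (w + z) = 0 by linear_combination h) with h' | h'
    · left; linear_combination h'
    · right; linear_combination h'
  have hmem : ∀ φ : L →+* ℂ, e φ ∈ S := by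
    intro φ
    have ha : φ (s2 : L) ^ 2 = c2 ^ 2 := by
      rw [hc2, ← map_pow, h2L]; exact map_ofNat φ 2
    have hb : φ (s3 : L) ^ 2 = c3 ^ 2 := by
      rw [hc3, ← map_pow, h3L]; exact map_ofNat φ 3
    rcases hsqchoice _ _ ha with h | h <;> rcases hsqchoice _ _ hb with h' | h' <;>
      simp [hSdef, hedef, h, h', Prod.ext_iff]
  have hinj : Set.InjOn e (Finset.univ : Finset (L →+* ℂ)) := by
    intro φ _ ψ _ hφψ
    exact hext φ ψ (congrArg Prod.fst hφψ) (congrArg Prod.snd hφψ)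
  have himg : Finset.image e Finset.univ = S := by
    apply Finset.eq_of_subset_of_card_le
    · intro p hp
      simp only [Finset.mem_image] at hp
      obtain ⟨φ, _, rfl⟩ := hp
      exact hmem φ
    · rw [hScard, Finset.card_image_of_injOn hinj, Finset.card_univ, hcard]
  have hprod : ∀ F : ℂ × ℂ → ℂ, ∏ φ : L →+* ℂ, F (e φ)
      = F (c2, c3) * F (c2, -c3) * F (-c2, c3) * F (-c2, -c3) := by
    intro F
    have h1 : ∏ φ : L →+* ℂ, F (e φ) = ∏ p ∈ Finset.image e Finset.univ, F p :=
      (Finset.prod_image (fun x hx y hy h => hinj hx hy h)).symm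
    rw [h1, himg, hSdef]
    rw [Finset.prod_insert (by simp [Prod.ext_iff, hc2ne, hc3ne]),
      Finset.prod_insert (by simp [Prod.ext_iff, hc2ne, hc3ne]),
      Finset.prod_insert (by simp [Prod.ext_iff, hc2ne, hc3ne]),
      Finset.prod_singleton]
    ring
  have hsurj : ∀ p ∈ S, ∃ φ : L →+* ℂ, e φ = p := by
    intro p hp
    rw [← himg] at hp
    simp only [Finset.mem_image] at hp
    obtain ⟨φ, _, hφ⟩ := hp
    exact ⟨φ, hφ⟩
  -- norm computations
  have hNγ₁ : Algebra.norm ℤ γ₁ = 40777 := by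
    have hφ : ∀ φ : L →+* ℂ, φ (γ₁ : L)
        = (fun p : ℂ × ℂ => (6 + p.2) + (7 + 3 * p.2) * (2 + p.1)) (e φ) := by
      intro φ
      show φ ((((6 + s3) + (7 + 3 * s3) * (2 + s2) : 𝓞 L)) : L) = _
      simp only [RingOfIntegers.coe_eq_algebraMap, map_add, map_mul, map_ofNat, hedef]
    have h : ((Algebra.norm ℤ γ₁ : ℤ) : ℂ)
        = ((6 + c3) + (7 + 3 * c3) * (2 + c2)) * ((6 + -c3) + (7 + 3 * -c3) * (2 + c2))
          * ((6 + c3) + (7 + 3 * c3) * (2 + -c2))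
          * ((6 + -c3) + (7 + 3 * -c3) * (2 + -c2)) :=
      (RDNU_norm_prod γ₁).trans ((Finset.prod_congr rfl fun φ _ => hφ φ).trans
        (hprod (fun p : ℂ × ℂ => (6 + p.2) + (7 + 3 * p.2) * (2 + p.1))))
    have hval : ((6 + c3) + (7 + 3 * c3) * (2 + c2)) * ((6 + -c3) + (7 + 3 * -c3) * (2 + c2))
          * ((6 + c3) + (7 + 3 * c3) * (2 + -c2))
          * ((6 + -c3) + (7 + 3 * -c3) * (2 + -c2)) = ((40777 : ℤ) : ℂ) := by
      push_cast
      linear_combination ((-34398 : ℂ) + 9754 * c3 ^ 2 - 720 * c3 ^ 4 + 2401 * c2 ^ 2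
        - 882 * c2 ^ 2 * c3 ^ 2 + 81 * c2 ^ 2 * c3 ^ 4) * hc2
        + ((-16809 : ℂ) + 961 * c3 ^ 2) * hc3
    exact_mod_cast h.trans hval
  have hNγ₂ : Algebra.norm ℤ γ₂ = 1348 := by
    have hφ : ∀ φ : L →+* ℂ, φ (γ₂ : L)
        = (fun p : ℂ × ℂ => (3 + p.2) + (4 + 2 * p.2) * (2 + p.1)) (e φ) := by
      intro φ
      show φ ((((3 + s3) + (4 + 2 * s3) * (2 + s2) : 𝓞 L)) : L) = _
      simp only [RingOfIntegers.coe_eq_algebraMap, map_add, map_mul, map_ofNat, hedef]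
    have h : ((Algebra.norm ℤ γ₂ : ℤ) : ℂ)
        = ((3 + c3) + (4 + 2 * c3) * (2 + c2)) * ((3 + -c3) + (4 + 2 * -c3) * (2 + c2))
          * ((3 + c3) + (4 + 2 * c3) * (2 + -c2))
          * ((3 + -c3) + (4 + 2 * -c3) * (2 + -c2)) :=
      (RDNU_norm_prod γ₂).trans ((Finset.prod_congr rfl fun φ _ => hφ φ).trans
        (hprod (fun p : ℂ × ℂ => (3 + p.2) + (4 + 2 * p.2) * (2 + p.1))))
    have hval : ((3 + c3) + (4 + 2 * c3) * (2 + c2)) * ((3 + -c3) + (4 + 2 * -c3) * (2 + c2))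
          * ((3 + c3) + (4 + 2 * c3) * (2 + -c2))
          * ((3 + -c3) + (4 + 2 * -c3) * (2 + -c2)) = ((1348 : ℤ) : ℂ) := by
      push_cast
      linear_combination ((-3360 : ℂ) + 1496 * c3 ^ 2 - 168 * c3 ^ 4 + 256 * c2 ^ 2
        - 128 * c2 ^ 2 * c3 ^ 2 + 16 * c2 ^ 2 * c3 ^ 4) * hc2
        + ((-2191 : ℂ) + 289 * c3 ^ 2) * hc3
    exact_mod_cast h.trans hval
  have hNα : ∀ a b : ℤ, Algebra.norm ℤ ((a : 𝓞 L) + (b : 𝓞 L) * s3) = (a ^ 2 - 3 * b ^ 2) ^ 2 := by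
    intro a b
    have hφ : ∀ φ : L →+* ℂ, φ (((a : 𝓞 L) + (b : 𝓞 L) * s3 : 𝓞 L) : L)
        = (fun p : ℂ × ℂ => (a : ℂ) + (b : ℂ) * p.2) (e φ) := by
      intro φ
      simp only [RingOfIntegers.coe_eq_algebraMap, map_add, map_mul, map_intCast, hedef]
    have h : ((Algebra.norm ℤ ((a : 𝓞 L) + (b : 𝓞 L) * s3) : ℤ) : ℂ)
        = ((a : ℂ) + (b : ℂ) * c3) * ((a : ℂ) + (b : ℂ) * -c3)
          * ((a : ℂ) + (b : ℂ) * c3) * ((a : ℂ) + (b : ℂ) * -c3) :=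
      (RDNU_norm_prod _).trans ((Finset.prod_congr rfl fun φ _ => hφ φ).trans
        (hprod (fun p : ℂ × ℂ => (a : ℂ) + (b : ℂ) * p.2)))
    have hval : ((a : ℂ) + (b : ℂ) * c3) * ((a : ℂ) + (b : ℂ) * -c3)
          * ((a : ℂ) + (b : ℂ) * c3) * ((a : ℂ) + (b : ℂ) * -c3)
        = (((a ^ 2 - 3 * b ^ 2) ^ 2 : ℤ) : ℂ) := by
      push_cast
      linear_combination (-(b : ℂ) ^ 2 * (2 * (a : ℂ) ^ 2 - (b : ℂ) ^ 2 * c3 ^ 2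
        - 3 * (b : ℂ) ^ 2)) * hc3
    exact_mod_cast h.trans hval
  -- non-units
  have hNUα₁ : ¬ IsUnit α₁ := by
    intro h
    have hα : α₁ = ((3 : ℤ) : 𝓞 L) + ((1 : ℤ) : 𝓞 L) * s3 := by push_cast; ring
    have := h.map (Algebra.norm ℤ (S := 𝓞 L))
    rw [hα, hNα 3 1] at this
    rcases Int.isUnit_iff.mp this with h' | h' <;> norm_num at h'
  have hNUα₂ : ¬ IsUnit α₂ := by
    intro h
    have hα : α₂ = ((6 : ℤ) : 𝓞 L) + ((1 : ℤ) : 𝓞 L) * s3 := by push_cast; ring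
    have := h.map (Algebra.norm ℤ (S := 𝓞 L))
    rw [hα, hNα 6 1] at this
    rcases Int.isUnit_iff.mp this with h' | h' <;> norm_num at h'
  -- memberships
  have hmem1 : α₁ ∈ Subring.closure ({s3} : Set (𝓞 L)) :=
    add_mem (ofNat_mem _ 3) (Subring.subset_closure rfl)
  have hmem2 : α₂ ∈ Subring.closure ({s3} : Set (𝓞 L)) :=
    add_mem (ofNat_mem _ 6) (Subring.subset_closure rfl)
  -- positivity of the norm form for totally positive elements of ℤ[√3]
  have hrim : c3.im = 0 := him0 (s3 : L)
  have hc3r : ((c3.re : ℝ) : ℂ) = c3 := Complex.ext (by simp) (by simp [hrim])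
  set r : ℝ := c3.re with hrdef
  have hr2 : r ^ 2 = 3 := by
    have h : ((r : ℂ)) ^ 2 = ((3 : ℝ) : ℂ) := by rw [hc3r, hc3]; norm_num
    exact_mod_cast h
  have hψ03 : ψ₀ (s3 : L) = r := rfl
  obtain ⟨φm, hφm⟩ := hsurj (c2, -c3) (by simp [hSdef])
  set ψm : L →+* ℝ := realify φm (hL φm) with hψmdef
  have hψm3 : ψm (s3 : L) = -r := by
    have h : φm (s3 : L) = -c3 := congrArg Prod.snd hφm
    show (φm (s3 : L)).re = -r
    rw [h]; simp [hrdef]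
  have hdpos : ∀ a b : ℤ, TPos L ((a : 𝓞 L) + (b : 𝓞 L) * s3) → 0 < a ^ 2 - 3 * b ^ 2 := by
    intro a b hT
    have hv : ∀ (ψ : L →+* ℝ), ψ (((a : 𝓞 L) + (b : 𝓞 L) * s3 : 𝓞 L) : L)
        = (a : ℝ) + (b : ℝ) * ψ (s3 : L) := by
      intro ψ
      simp only [RingOfIntegers.coe_eq_algebraMap, map_add, map_mul, map_intCast]
    have h1 := hT ψ₀
    have h2 := hT ψm
    rw [hv ψ₀, hψ03] at h1
    rw [hv ψm, hψm3] at h2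
    have hp : (0 : ℝ) < ((a : ℝ) + b * r) * ((a : ℝ) + b * -r) := mul_pos h1 h2
    have hpos : (0 : ℝ) < (a : ℝ) ^ 2 - 3 * (b : ℝ) ^ 2 := by nlinarith [hr2]
    exact_mod_cast hpos
  -- primitivity
  have hunit_of_one : ∀ a b : ℤ, a ^ 2 - 3 * b ^ 2 = 1 → IsUnit ((a : 𝓞 L) + (b : 𝓞 L) * s3) := by
    intro a b h1
    refine IsUnit.of_mul_eq_one ((a : 𝓞 L) - (b : 𝓞 L) * s3) ?_
    have hcast : ((a : 𝓞 L)) ^ 2 - 3 * ((b : 𝓞 L)) ^ 2 = 1 := by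
      exact_mod_cast congrArg (fun n : ℤ => (n : 𝓞 L)) h1
    linear_combination (-((b : 𝓞 L)) ^ 2) * h3 + hcast
  have hPrim1 : LKPrim L s3 γ₁ := by
    refine ⟨hTγ₁, ?_⟩
    intro α hαmem hαpos hαunit β hβpos heq
    obtain ⟨a, b, rfl⟩ := closure_repr s3 h3 hαmem
    have hd := hdpos a b hαpos
    have hnormeq : (40777 : ℤ) = (a ^ 2 - 3 * b ^ 2) ^ 2 * Algebra.norm ℤ β := by
      rw [← hNγ₁, heq, map_mul, hNα]
    have hdvd : (a ^ 2 - 3 * b ^ 2) ^ 2 ∣ (40777 : ℤ) := ⟨Algebra.norm ℤ β, hnormeq⟩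
    rcases divisor_cases hd hdvd with h1 | h11
    · exact hαunit (hunit_of_one a b h1)
    · exact no_sq_two_mod_three (Or.inl rfl) h11
  have hPrim2 : LKPrim L s3 γ₂ := by
    refine ⟨hTγ₂, ?_⟩
    intro α hαmem hαpos hαunit β hβpos heq
    obtain ⟨a, b, rfl⟩ := closure_repr s3 h3 hαmem
    have hd := hdpos a b hαpos
    have hnormeq : (1348 : ℤ) = (a ^ 2 - 3 * b ^ 2) ^ 2 * Algebra.norm ℤ β := by
      rw [← hNγ₂, heq, map_mul, hNα]
    have hdvd : (a ^ 2 - 3 * b ^ 2) ^ 2 ∣ (1348 : ℤ) := ⟨Algebra.norm ℤ β, hnormeq⟩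
    rcases divisor_cases' hd hdvd with h1 | h2'
    · exact hαunit (hunit_of_one a b h1)
    · exact no_sq_two_mod_three (Or.inr rfl) h2'
  -- factorizations
  have hfac1 : δ = α₁ * γ₁ := by
    show (21 + 9 * s3) + (30 + 16 * s3) * (2 + s2)
      = (3 + s3) * ((6 + s3) + (7 + 3 * s3) * (2 + s2))
    linear_combination (-(7 + 3 * s2)) * h3
  have hfac2 : δ = α₂ * γ₂ := by
    show (21 + 9 * s3) + (30 + 16 * s3) * (2 + s2)
      = (6 + s3) * ((3 + s3) + (4 + 2 * s3) * (2 + s2))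
    linear_combination (-(5 + 2 * s2)) * h3
  -- non-associatedness
  have hlast : ∀ u ∈ Subring.closure ({s3} : Set (𝓞 L)), IsUnit u → TPos L u →
      γ₂ ≠ u * γ₁ := by
    intro u humem _ _ hequ
    obtain ⟨a, b, rfl⟩ := closure_repr s3 h3 humem
    have hnormeq : (1348 : ℤ) = (a ^ 2 - 3 * b ^ 2) ^ 2 * 40777 := by
      rw [← hNγ₂, hequ, map_mul, hNα, hNγ₁]
    obtain ⟨D, hD0, hDeq⟩ : ∃ D : ℤ, 0 ≤ D ∧ (1348 : ℤ) = D * 40777 :=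
      ⟨_, sq_nonneg _, hnormeq⟩
    omega
  exact ⟨hTδ, hmem1, hTα₁, hNUα₁, hmem2, hTα₂, hNUα₂, hPrim1, hPrim2, hfac1, hfac2, hlast⟩
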